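/- For each n ∈ N let R_n denote the Minkowski reflection R_n(v) = v − 2(B(v,n)/B(n,n)) n, a 5×5 real matrix, and let Γ ≤ GL(5,ℝ) be the subgroup generated by {R_n : n ∈ N}. Then there exists ε > 0 with the following property: for every group homomorphism ρ : Γ → GL(5,ℝ) such that for all n ∈ N the matrix ρ(R_n) satisfies ρ(R_n)ᵀ M ρ(R_n) = M and ‖ρ(R_n) − R_n‖ < ε, each ρ(R_n) is a reflection, i.e., ρ(R_n)² = I and dim ker(ρ(R_n) + I) = 1. -/

import Mathlib

/-!
A generating reflection `g = R_n` satisfies `g² = 1` in `Γ`, so `A = ρ(g)` is an involution. For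
an involution, `(1 - A)/2` is a projection onto `ker (A + 1)`, hence
`2 · dim ker (A + 1) = 5 - tr A`. Since `tr R_n = 3` and the trace moves by at most `5 ‖A - R_n‖`,
closeness to `R_n` with `ε = 2/5` forces `0 < dim ker (A + 1) < 2`.
-/

noncomputable section

open Matrix

attribute [local instance] Matrix.normedAddCommGroup

/-- The Minkowski bilinear form of signature (1,4) on ℝ⁵. -/
def Bform (x y : Fin 5 → ℝ) : ℝ :=
  -(x 0 * y 0) + x 1 * y 1 + x 2 * y 2 + x 3 * y 3 + x 4 * y 4

/-- The golden ratio τ = (1+√5)/2. -/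
def gold : ℝ := (1 + Real.sqrt 5) / 2

/-- The 96-element set N of vectors obtained by applying even permutations of the last
4 coordinates to (√(2τ), ±τ, ±1, ±τ⁻¹, 0), with all 8 sign choices. -/
def Nset : Set (Fin 5 → ℝ) :=
  {v | ∃ σ : Equiv.Perm (Fin 4), Equiv.Perm.sign σ = 1 ∧
    ∃ ε : Fin 3 → ℝ, (∀ i, ε i = 1 ∨ ε i = -1) ∧
      v = Fin.cons (Real.sqrt (2 * gold))
            (fun i => ![ε 0 * gold, ε 1, ε 2 * gold⁻¹, 0] (σ i))}

/-- The matrix M = diag(−1,1,1,1,1) of the Minkowski form. -/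
def Mink : Matrix (Fin 5) (Fin 5) ℝ := Matrix.diagonal ![-1, 1, 1, 1, 1]

/-- The matrix of the Minkowski reflection v ↦ v − 2(B(v,n)/B(n,n)) n. -/
def reflM (v : Fin 5 → ℝ) : Matrix (Fin 5) (Fin 5) ℝ :=
  1 - (2 / Bform v v) •
    Matrix.of (fun i j => v i * ((if j = 0 then (-1 : ℝ) else 1) * v j))

/-- The subgroup Γ of GL(5,ℝ) generated by the reflections in the 96 walls. -/
def Gamma : Subgroup (GL (Fin 5) ℝ) :=
  Subgroup.closure {g : GL (Fin 5) ℝ | ∃ n ∈ Nset, (↑g : Matrix (Fin 5) (Fin 5) ℝ) = reflM n}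

namespace Matrix

variable {ι K : Type*} [Fintype ι] [DecidableEq ι] [Field K]

theorem one_sub_smul_vecMulVec_mul_self {v w : ι → K} (h : w ⬝ᵥ v ≠ 0) :
    (1 - (2 / (w ⬝ᵥ v)) • vecMulVec v w) * (1 - (2 / (w ⬝ᵥ v)) • vecMulVec v w) = 1 := by
  have hsq : vecMulVec v w * vecMulVec v w = (w ⬝ᵥ v) • vecMulVec v w := by
    rw [vecMulVec_mul_vecMulVec, vecMulVec_smul]
  have hc : 2 / (w ⬝ᵥ v) * (2 / (w ⬝ᵥ v)) * (w ⬝ᵥ v) = 2 / (w ⬝ᵥ v) + 2 / (w ⬝ᵥ v) := by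
    field_simp; ring
  simp only [sub_mul, mul_sub, one_mul, mul_one, smul_mul_smul_comm, hsq, smul_smul, hc, add_smul]
  abel

theorem trace_one_sub_smul_vecMulVec {v w : ι → K} (h : w ⬝ᵥ v ≠ 0) :
    (1 - (2 / (w ⬝ᵥ v)) • vecMulVec v w).trace = Fintype.card ι - 2 := by
  rw [trace_sub, trace_smul, trace_vecMulVec, trace_one, smul_eq_mul, dotProduct_comm v w,
    div_mul_cancel₀ _ h]

/-- For an involution `A`, `(1 - A) / 2` projects onto the `-1`-eigenspace along the
`+1`-eigenspace, and the rank of a projection is its trace. -/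
theorem finrank_ker_add_one_of_mul_self [NeZero (2 : K)] {A : Matrix ι ι K} (hA : A * A = 1) :
    (Module.finrank K (LinearMap.ker (toLin' (A + 1))) : K) = (Fintype.card ι - A.trace) / 2 := by
  have hproj :
      LinearMap.IsProj (LinearMap.ker (toLin' (A + 1))) (toLin' ((2⁻¹ : K) • (1 - A))) := by
    constructor
    · intro x
      rw [LinearMap.mem_ker, ← toLin'_mul_apply, mul_smul_comm, add_mul, mul_sub, hA]
      simp
    · intro x hx
      rw [LinearMap.mem_ker, toLin'_apply, add_mulVec, one_mulVec] at hx
      rw [toLin'_apply, smul_mulVec, sub_mulVec, one_mulVec, eq_neg_of_add_eq_zero_left hx,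
        sub_neg_eq_add, ← two_smul K x, smul_smul, inv_mul_cancel₀ two_ne_zero, one_smul]
  rw [← hproj.trace, trace_toLin'_eq, trace_smul, trace_sub, trace_one, smul_eq_mul]
  ring

theorem finrank_ker_add_one_eq_one_of_mul_self [LinearOrder K] [IsStrictOrderedRing K]
    {A : Matrix ι ι K} (hA : A * A = 1) (htr : |A.trace - (Fintype.card ι - 2)| < 2) :
    Module.finrank K (LinearMap.ker (toLin' (A + 1))) = 1 := by
  have hk := finrank_ker_add_one_of_mul_self hA
  set k := Module.finrank K (LinearMap.ker (toLin' (A + 1)))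
  have hpos : (0 : K) < k := by linarith [abs_lt.1 htr]
  have hlt : (k : K) < 2 := by linarith [abs_lt.1 htr]
  have : 0 < k := by exact_mod_cast hpos
  have : k < 2 := by exact_mod_cast hlt
  omega

end Matrix

section EntrywiseNorm

attribute [local instance] Matrix.seminormedAddCommGroup

theorem Matrix.norm_trace_le_card_mul_norm {ι α : Type*} [Fintype ι] [SeminormedAddCommGroup α]
    (A : Matrix ι ι α) : ‖A.trace‖ ≤ Fintype.card ι * ‖A‖ :=
  calc ‖A.trace‖ ≤ ∑ i, ‖A i i‖ := norm_sum_le _ _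
    _ ≤ ∑ _i : ι, ‖A‖ := Finset.sum_le_sum fun _ _ => A.norm_entry_le_entrywise_sup_norm
    _ = Fintype.card ι * ‖A‖ := by simp

end EntrywiseNorm

lemma Bform_self (x : Fin 5 → ℝ) : Bform x x = -x 0 ^ 2 + ∑ i : Fin 4, x i.succ ^ 2 := by
  simp only [Bform, Fin.sum_univ_four]
  ring_nf
  rfl

lemma gold_sq_add_inv_sq : gold ^ 2 + gold⁻¹ ^ 2 = 3 := by
  have hs : Real.sqrt 5 ^ 2 = 5 := Real.sq_sqrt (by norm_num)
  have hg : gold ≠ 0 := by unfold gold; positivity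
  field_simp
  unfold gold
  nlinarith

lemma Bform_self_of_mem_Nset {n : Fin 5 → ℝ} (hn : n ∈ Nset) : Bform n n = 3 - Real.sqrt 5 := by
  obtain ⟨σ, -, ε, hε, rfl⟩ := hn
  have hsq : ∀ i, ε i ^ 2 = 1 := fun i => by rcases hε i with h | h <;> simp [h]
  have h2gold : Real.sqrt (2 * gold) ^ 2 = 1 + Real.sqrt 5 :=
    (Real.sq_sqrt (by unfold gold; positivity)).trans (by unfold gold; ring)
  simp only [Bform_self, Fin.cons_zero, Fin.cons_succ, h2gold]
  rw [Equiv.sum_comp σ (fun j => (![ε 0 * gold, ε 1, ε 2 * gold⁻¹, 0] : Fin 4 → ℝ) j ^ 2)]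
  simp only [Fin.sum_univ_four, Matrix.cons_val, mul_pow, hsq]
  linear_combination gold_sq_add_inv_sq

lemma Bform_self_ne_zero_of_mem_Nset {n : Fin 5 → ℝ} (hn : n ∈ Nset) : Bform n n ≠ 0 := by
  have : Real.sqrt 5 < 3 := (Real.sqrt_lt' (by norm_num)).2 (by norm_num)
  rw [Bform_self_of_mem_Nset hn]
  linarith

lemma Mink_mulVec (x : Fin 5 → ℝ) : Mink *ᵥ x = fun j => (if j = 0 then -1 else 1) * x j := by
  ext j
  fin_cases j <;> simp [Mink, mulVec_diagonal]

lemma Bform_self_eq_dotProduct (x : Fin 5 → ℝ) : Bform x x = Mink *ᵥ x ⬝ᵥ x := by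
  simp [Bform, Mink_mulVec, dotProduct, Fin.sum_univ_five]

lemma reflM_eq_one_sub_smul_vecMulVec (n : Fin 5 → ℝ) :
    reflM n = 1 - (2 / (Mink *ᵥ n ⬝ᵥ n)) • vecMulVec n (Mink *ᵥ n) := by
  rw [reflM, Bform_self_eq_dotProduct, Mink_mulVec]
  rfl

lemma reflM_mul_self {n : Fin 5 → ℝ} (hn : Bform n n ≠ 0) : reflM n * reflM n = 1 := by
  rw [Bform_self_eq_dotProduct] at hn
  rw [reflM_eq_one_sub_smul_vecMulVec]
  exact one_sub_smul_vecMulVec_mul_self hn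

lemma trace_reflM {n : Fin 5 → ℝ} (hn : Bform n n ≠ 0) : (reflM n).trace = 3 := by
  rw [Bform_self_eq_dotProduct] at hn
  rw [reflM_eq_one_sub_smul_vecMulVec, trace_one_sub_smul_vecMulVec hn]
  norm_num
/-- Representations of Γ close to the inclusion that send the generating reflections
into O(1,4) send each generating reflection to a reflection. -/
theorem stmt3 :
    ∃ ε > 0, ∀ ρ : Gamma →* GL (Fin 5) ℝ,
      (∀ (g : Gamma) (n : Fin 5 → ℝ), n ∈ Nset →
          ((g : GL (Fin 5) ℝ) : Matrix (Fin 5) (Fin 5) ℝ) = reflM n →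
          ((ρ g : Matrix (Fin 5) (Fin 5) ℝ)ᵀ * Mink * (ρ g : Matrix (Fin 5) (Fin 5) ℝ) = Mink ∧
            ‖(ρ g : Matrix (Fin 5) (Fin 5) ℝ) - reflM n‖ < ε)) →
      ∀ (g : Gamma) (n : Fin 5 → ℝ), n ∈ Nset →
        ((g : GL (Fin 5) ℝ) : Matrix (Fin 5) (Fin 5) ℝ) = reflM n →
        ((ρ g : Matrix (Fin 5) (Fin 5) ℝ) * (ρ g : Matrix (Fin 5) (Fin 5) ℝ) = 1 ∧
          Module.finrank ℝ
            (LinearMap.ker (Matrix.toLin' ((ρ g : Matrix (Fin 5) (Fin 5) ℝ) + 1))) = 1) := by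
  refine ⟨2 / 5, by norm_num, fun ρ hρ g n hn hg => ?_⟩
  have hB := Bform_self_ne_zero_of_mem_Nset hn
  have hg2 : g * g = 1 := Subtype.ext <| Units.ext <| by simp [hg, reflM_mul_self hB]
  set A := (ρ g : Matrix (Fin 5) (Fin 5) ℝ)
  have hA : A * A = 1 := by
    simpa using congrArg (fun h => ((ρ h : GL (Fin 5) ℝ) : Matrix (Fin 5) (Fin 5) ℝ)) hg2
  have htrace : |A.trace - 3| < 2 := by
    have := (A - reflM n).norm_trace_le_card_mul_norm
    rw [trace_sub, trace_reflM hB, Real.norm_eq_abs, Fintype.card_fin, Nat.cast_ofNat] at this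
    linarith [(hρ g n hn hg).2]
  refine ⟨hA, finrank_ker_add_one_eq_one_of_mul_self hA ?_⟩
  norm_num [htrace]
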